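/- arXiv:1404.0758 — 2 statements merged into one kernel-verified Lean document; each statement's English description precedes it below -/
import Mathlib

section
/- Let 0 < r ≤ 1, let v be a submultiplicative weight on ℝ^d (v even, v(x+y) ≤ v(x)v(y)), let ω be a v-moderate weight (ω(x+y) ≤ C ω(x) v(y)), and let p ∈ [r, ∞]. Then for sequences a ∈ ℓ^r_{(v)}(ℤ^d) and b ∈ ℓ^p_{(ω)}(ℤ^d), the convolution a*b satisfies ‖a*b‖_{ℓ^p_{(ω)}} ≤ C ‖a‖_{ℓ^r_{(v)}} ‖b‖_{ℓ^p_{(ω)}}, where ‖c‖_{ℓ^p_{(μ)}} = ‖c·μ‖_{ℓ^p} denotes the weighted quasi-norm. -/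
/-!
Moderateness gives `ω j ≤ C ω (j - k) v k`, so the weighted convolution is dominated pointwise by
`C` times the convolution `A ⋆ B` of the nonnegative sequences `A = |a| v` and `B = |b| ω`. This
reduces the claim to the unweighted Young inequality `‖A ⋆ B‖_p ≤ ‖A‖_r ‖B‖_p` for the counting
measure. For `p ≥ 1`, the weighted Hölder (Jensen) inequality
`(∑ A_k B_{j-k})^p ≤ (∑ A)^(p-1) ∑ A_k B_{j-k}^p` gives `‖A ⋆ B‖_p ≤ ‖A‖_1 ‖B‖_p`; for `p ≤ 1`,
the `p`-triangle inequality `(∑ x_i)^p ≤ ∑ x_i^p` gives `‖A ⋆ B‖_p ≤ ‖A‖_p ‖B‖_p`. Both are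
finished by the embedding `ℓ^r ⊆ ℓ^s` for `r ≤ s`.
-/

open MeasureTheory Measure
open scoped ENNReal NNReal

namespace ENNReal

variable {ι : Type*}

theorem rpow_tsum_le_tsum_rpow (f : ι → ℝ≥0∞) {q : ℝ} (hq0 : 0 < q) (hq1 : q ≤ 1) :
    (∑' i, f i) ^ q ≤ ∑' i, f i ^ q := by
  rw [ENNReal.tsum_eq_iSup_sum, ← ENNReal.le_rpow_inv_iff hq0]
  refine iSup_le fun s => ?_
  rw [ENNReal.le_rpow_inv_iff hq0]
  calc (∑ i ∈ s, f i) ^ q ≤ ∑ i ∈ s, f i ^ q :=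
        Finset.le_sum_of_subadditive (· ^ q) (ENNReal.zero_rpow_of_pos hq0).le
          (fun x y => ENNReal.rpow_add_le_add_rpow x y hq0.le hq1) s f
    _ ≤ ∑' i, f i ^ q := ENNReal.sum_le_tsum s

theorem inner_le_weight_mul_Lp_tsum {p : ℝ} (hp : 1 ≤ p) (w f : ι → ℝ≥0∞) :
    ∑' i, w i * f i ≤ (∑' i, w i) ^ (1 - p⁻¹) * (∑' i, w i * f i ^ p) ^ p⁻¹ := by
  have : 0 ≤ 1 - p⁻¹ := sub_nonneg.2 (inv_le_one_of_one_le₀ hp)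
  rw [ENNReal.tsum_eq_iSup_sum]
  refine iSup_le fun s => (inner_le_weight_mul_Lp_of_nonneg s hp w f).trans ?_
  gcongr <;> exact ENNReal.sum_le_tsum s

end ENNReal

namespace MeasureTheory

section Count

variable {α : Type*} [MeasurableSpace α] [MeasurableSingletonClass α]

theorem eLpNorm_count_eq_tsum {ε : Type*} [ENorm ε] (f : α → ε) {p : ℝ≥0∞} (hp0 : p ≠ 0)
    (hp : p ≠ ∞) : eLpNorm f p count = (∑' i, ‖f i‖ₑ ^ p.toReal) ^ (1 / p.toReal) := by
  rw [eLpNorm_eq_lintegral_rpow_enorm_toReal hp0 hp, lintegral_count]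

theorem eLpNorm_count_le_of_exponent_le {ε : Type*} [TopologicalSpace ε] [ContinuousENorm ε]
    (f : α → ε) {p q : ℝ≥0∞} (hp : p ≠ 0) (hpq : p ≤ q) :
    eLpNorm f q count ≤ eLpNorm f p count := by
  rcases eq_or_ne q ∞ with rfl | hq
  · rw [eLpNorm_exponent_top, eLpNormEssSup_count]
    exact iSup_le fun i => enorm_le_eLpNorm_count f i hp
  have hp_top : p ≠ ∞ := ne_top_of_le_ne_top hq hpq
  have hp0 : 0 < p.toReal := ENNReal.toReal_pos hp hp_top
  have hpq' : p.toReal ≤ q.toReal := ENNReal.toReal_mono hq hpq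
  have hq0 : 0 < q.toReal := hp0.trans_le hpq'
  rw [eLpNorm_count_eq_tsum f hp hp_top, eLpNorm_count_eq_tsum f (ne_bot_of_le_ne_bot hp hpq) hq]
  have hsum : (∑' i, ‖f i‖ₑ ^ q.toReal) ^ (p.toReal / q.toReal) ≤ ∑' i, ‖f i‖ₑ ^ p.toReal := by
    refine (ENNReal.rpow_tsum_le_tsum_rpow _ (div_pos hp0 hq0)
      ((div_le_one hq0).2 hpq')).trans_eq ?_
    simp_rw [← ENNReal.rpow_mul, mul_div_cancel₀ _ hq0.ne']
  calc (∑' i, ‖f i‖ₑ ^ q.toReal) ^ (1 / q.toReal)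
      = ((∑' i, ‖f i‖ₑ ^ q.toReal) ^ (p.toReal / q.toReal)) ^ (1 / p.toReal) := by
        rw [← ENNReal.rpow_mul]
        congr 1
        field_simp
    _ ≤ (∑' i, ‖f i‖ₑ ^ p.toReal) ^ (1 / p.toReal) := by gcongr

end Count

section Convolution

variable {G : Type*} [AddGroup G] [MeasurableSpace G] [MeasurableSingletonClass G]
  (f g : G → ℝ≥0∞)

theorem lconvolution_count_apply (x : G) :
    (f ⋆ₗ[count] g) x = ∑' y, f y * g (-y + x) :=
  lintegral_count _

theorem tsum_lconvolution_count : ∑' x, (f ⋆ₗ[count] g) x = (∑' x, f x) * ∑' x, g x := by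
  simp_rw [lconvolution_count_apply]
  rw [ENNReal.tsum_comm, ← ENNReal.tsum_mul_right]
  refine tsum_congr fun y => ?_
  rw [ENNReal.tsum_mul_left]
  congr 1
  exact (Equiv.addLeft (-y)).tsum_eq g

theorem eLpNorm_lconvolution_count_le_of_one_le {p : ℝ≥0∞} (hp : 1 ≤ p) :
    eLpNorm (f ⋆ₗ[count] g) p count ≤ eLpNorm f 1 count * eLpNorm g p count := by
  have hf : eLpNorm f 1 count = ∑' x, f x := by
    simp only [eLpNorm_one_eq_lintegral_enorm, enorm_eq_self, lintegral_count]
  rw [hf]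
  rcases eq_or_ne p ∞ with rfl | hp_top
  · rw [eLpNorm_exponent_top, eLpNormEssSup_count]
    refine iSup_le fun x => ?_
    rw [enorm_eq_self, lconvolution_count_apply, ← ENNReal.tsum_mul_right]
    gcongr with y
    simpa using enorm_le_eLpNorm_count g (-y + x) (p := ∞) ENNReal.top_ne_zero
  have hp0 : p ≠ 0 := (zero_lt_one.trans_le hp).ne'
  have hq : 1 ≤ p.toReal := by simpa using ENNReal.toReal_mono hp_top hp
  have hq0 : 0 < p.toReal := zero_lt_one.trans_le hq
  rw [eLpNorm_count_eq_tsum _ hp0 hp_top, eLpNorm_count_eq_tsum _ hp0 hp_top]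
  simp only [enorm_eq_self]
  set q := p.toReal
  have jensen : ∀ x, (f ⋆ₗ[count] g) x ^ q ≤
      (∑' y, f y) ^ (q - 1) * (f ⋆ₗ[count] fun z => g z ^ q) x := by
    intro x
    rw [lconvolution_count_apply, lconvolution_count_apply]
    calc (∑' y, f y * g (-y + x)) ^ q
        ≤ ((∑' y, f y) ^ (1 - q⁻¹) * (∑' y, f y * g (-y + x) ^ q) ^ q⁻¹) ^ q := by
          gcongr; exact ENNReal.inner_le_weight_mul_Lp_tsum hq f _
      _ = (∑' y, f y) ^ (q - 1) * ∑' y, f y * g (-y + x) ^ q := by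
          rw [ENNReal.mul_rpow_of_nonneg _ _ hq0.le, ← ENNReal.rpow_mul, ← ENNReal.rpow_mul,
            inv_mul_cancel₀ hq0.ne', ENNReal.rpow_one, sub_mul, one_mul, inv_mul_cancel₀ hq0.ne']
  have hsum : ∑' x, (f ⋆ₗ[count] g) x ^ q ≤ (∑' y, f y) ^ q * ∑' x, g x ^ q :=
    calc ∑' x, (f ⋆ₗ[count] g) x ^ q
        ≤ ∑' x, (∑' y, f y) ^ (q - 1) * (f ⋆ₗ[count] fun z => g z ^ q) x :=
          ENNReal.tsum_le_tsum jensen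
      _ = (∑' y, f y) ^ (q - 1) * (∑' y, f y) ^ (1 : ℝ) * ∑' x, g x ^ q := by
          rw [ENNReal.tsum_mul_left, tsum_lconvolution_count, ENNReal.rpow_one, mul_assoc]
      _ = (∑' y, f y) ^ q * ∑' x, g x ^ q := by
          rw [← ENNReal.rpow_add_of_nonneg _ _ (sub_nonneg.2 hq) zero_le_one, sub_add_cancel]
  calc (∑' x, (f ⋆ₗ[count] g) x ^ q) ^ (1 / q)
      ≤ ((∑' y, f y) ^ q * ∑' x, g x ^ q) ^ (1 / q) := by gcongr
    _ = (∑' y, f y) * (∑' x, g x ^ q) ^ (1 / q) := by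
        rw [ENNReal.mul_rpow_of_nonneg _ _ (by positivity), ← ENNReal.rpow_mul,
          mul_one_div_cancel hq0.ne', ENNReal.rpow_one]

theorem eLpNorm_lconvolution_count_le_of_le_one {p : ℝ≥0∞} (hp0 : p ≠ 0) (hp1 : p ≤ 1) :
    eLpNorm (f ⋆ₗ[count] g) p count ≤ eLpNorm f p count * eLpNorm g p count := by
  have hp_top : p ≠ ∞ := ne_top_of_le_ne_top ENNReal.one_ne_top hp1
  have hq0 : 0 < p.toReal := ENNReal.toReal_pos hp0 hp_top
  have hq1 : p.toReal ≤ 1 := by simpa using ENNReal.toReal_mono ENNReal.one_ne_top hp1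
  rw [eLpNorm_count_eq_tsum _ hp0 hp_top, eLpNorm_count_eq_tsum _ hp0 hp_top,
    eLpNorm_count_eq_tsum _ hp0 hp_top, ← ENNReal.mul_rpow_of_nonneg _ _ (by positivity)]
  simp only [enorm_eq_self]
  set q := p.toReal
  gcongr
  calc ∑' x, (f ⋆ₗ[count] g) x ^ q
      ≤ ∑' x, ((fun y => f y ^ q) ⋆ₗ[count] fun z => g z ^ q) x := by
        gcongr with x
        rw [lconvolution_count_apply, lconvolution_count_apply]
        refine (ENNReal.rpow_tsum_le_tsum_rpow _ hq0 hq1).trans_eq ?_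
        simp_rw [ENNReal.mul_rpow_of_nonneg _ _ hq0.le]
    _ = (∑' y, f y ^ q) * ∑' x, g x ^ q := tsum_lconvolution_count _ _

theorem eLpNorm_lconvolution_count_le {p r : ℝ≥0∞} (hr0 : r ≠ 0) (hr1 : r ≤ 1) (hrp : r ≤ p) :
    eLpNorm (f ⋆ₗ[count] g) p count ≤ eLpNorm f r count * eLpNorm g p count := by
  rcases le_total 1 p with hp1 | hp1
  · refine (eLpNorm_lconvolution_count_le_of_one_le f g hp1).trans ?_
    gcongr
    exact eLpNorm_count_le_of_exponent_le f hr0 hr1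
  · refine (eLpNorm_lconvolution_count_le_of_le_one f g (ne_bot_of_le_ne_bot hr0 hrp) hp1).trans ?_
    gcongr
    exact eLpNorm_count_le_of_exponent_le f hr0 hrp

end Convolution

theorem enorm_tsum_mul_sub_mul_le_lconvolution {G : Type*} [AddCommGroup G] [MeasurableSpace G]
    [MeasurableSingletonClass G] {ω v : G → ℝ} {C : ℝ} (hC : 0 ≤ C) (hω : ∀ x, 0 ≤ ω x)
    (hv : ∀ x, 0 ≤ v x) (hmod : ∀ x y, ω (x + y) ≤ C * ω x * v y) (a b : G → ℂ) (j : G) :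
    ‖(∑' k, a k * b (j - k)) * (ω j : ℂ)‖ₑ ≤ ENNReal.ofReal C *
      ((fun k => ‖a k * (v k : ℂ)‖ₑ) ⋆ₗ[count] fun k => ‖b k * (ω k : ℂ)‖ₑ) j := by
  have hofReal : ∀ {x : ℝ}, 0 ≤ x → ‖(x : ℂ)‖ₑ = ENNReal.ofReal x := fun hx => by
    rw [← ofReal_norm, Complex.norm_real, Real.norm_of_nonneg hx]
  have hweight : ∀ k, ‖(ω j : ℂ)‖ₑ ≤ ENNReal.ofReal C * ‖(v k : ℂ)‖ₑ * ‖(ω (j - k) : ℂ)‖ₑ := by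
    intro k
    rw [hofReal (hω _), hofReal (hv _), hofReal (hω _), ← ENNReal.ofReal_mul hC,
      ← ENNReal.ofReal_mul (mul_nonneg hC (hv k))]
    refine ENNReal.ofReal_le_ofReal ?_
    simpa [mul_right_comm] using hmod (j - k) k
  rw [lconvolution_count_apply, ← ENNReal.tsum_mul_left, enorm_mul]
  calc ‖∑' k, a k * b (j - k)‖ₑ * ‖(ω j : ℂ)‖ₑ
      ≤ ∑' k, ‖a k * b (j - k)‖ₑ * ‖(ω j : ℂ)‖ₑ := by
        rw [ENNReal.tsum_mul_right]
        gcongr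
        exact enorm_tsum_le_tsum_enorm
    _ ≤ ∑' k, ENNReal.ofReal C * (‖a k * (v k : ℂ)‖ₑ * ‖b (-k + j) * (ω (-k + j) : ℂ)‖ₑ) := by
        refine ENNReal.tsum_le_tsum fun k => ?_
        rw [neg_add_eq_sub]
        calc ‖a k * b (j - k)‖ₑ * ‖(ω j : ℂ)‖ₑ
            ≤ ‖a k * b (j - k)‖ₑ * (ENNReal.ofReal C * ‖(v k : ℂ)‖ₑ * ‖(ω (j - k) : ℂ)‖ₑ) := by
              gcongr
              exact hweight k
          _ = _ := by
              simp only [enorm_mul]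
              ring

end MeasureTheory

theorem stmt4_general (d : ℕ) (r : ℝ) (hr0 : 0 < r) (hr1 : r ≤ 1)
    (p : ℝ≥0∞) (hrp : ENNReal.ofReal r ≤ p)
    (ω v : (Fin d → ℝ) → ℝ) (C : ℝ) (hC : 0 < C)
    (hω : ∀ x, 0 < ω x) (hv : ∀ x, 0 < v x)
    (hmod : ∀ x y, ω (x + y) ≤ C * ω x * v y)
    (ι : (Fin d → ℤ) → (Fin d → ℝ)) (hι : ∀ j i, ι j i = (j i : ℝ))
    (a b : (Fin d → ℤ) → ℂ) :
    eLpNorm (fun j => (∑' k, a k * b (j - k)) * (ω (ι j) : ℂ)) p Measure.count ≤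
      ENNReal.ofReal C *
        eLpNorm (fun j => a j * (v (ι j) : ℂ)) (ENNReal.ofReal r) Measure.count *
        eLpNorm (fun j => b j * (ω (ι j) : ℂ)) p Measure.count := by
  have hι_add : ∀ j k, ι (j + k) = ι j + ι k := fun j k => funext fun i => by simp [hι]
  have hpointwise := enorm_tsum_mul_sub_mul_le_lconvolution hC.le (fun j => (hω (ι j)).le)
    (fun j => (hv (ι j)).le) (fun j k => by simpa only [hι_add] using hmod (ι j) (ι k)) a b
  calc _ ≤ ENNReal.ofReal C * eLpNorm (_ ⋆ₗ[count] _) p count :=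
        eLpNorm_le_nnreal_smul_eLpNorm_of_ae_le_mul'
          (ae_of_all _ fun j => (hpointwise j).trans_eq (by rw [enorm_eq_self]; rfl)) p
    _ ≤ ENNReal.ofReal C * (eLpNorm (fun j => ‖a j * (v (ι j) : ℂ)‖ₑ) (ENNReal.ofReal r) count *
          eLpNorm (fun j => ‖b j * (ω (ι j) : ℂ)‖ₑ) p count) := by
        gcongr
        exact eLpNorm_lconvolution_count_le _ _ (ENNReal.ofReal_pos.2 hr0).ne'
          (ENNReal.ofReal_le_one.2 hr1) hrp
    _ = _ := by rw [eLpNorm_enorm, eLpNorm_enorm, mul_assoc]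

/-- Weighted Young-type inequality ℓ^r_{(v)} * ℓ^p_{(ω)} ⊆ ℓ^p_{(ω)} on ℤ^d,
for 0 < r ≤ 1, r ≤ p, v submultiplicative and ω v-moderate on ℝ^d. -/
theorem stmt4 (d : ℕ) (r : ℝ) (hr0 : 0 < r) (hr1 : r ≤ 1)
    (p : ℝ≥0∞) (hrp : ENNReal.ofReal r ≤ p)
    (ω v : (Fin d → ℝ) → ℝ) (C : ℝ) (hC : 0 < C)
    (hω : ∀ x, 0 < ω x) (hv : ∀ x, 0 < v x)
    (hveven : ∀ x, v (-x) = v x)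
    (hvsub : ∀ x y, v (x + y) ≤ v x * v y)
    (hmod : ∀ x y, ω (x + y) ≤ C * ω x * v y)
    (ι : (Fin d → ℤ) → (Fin d → ℝ)) (hι : ∀ j i, ι j i = (j i : ℝ))
    (a b : (Fin d → ℤ) → ℂ)
    (ha : eLpNorm (fun j => a j * (v (ι j) : ℂ)) (ENNReal.ofReal r) Measure.count ≠ ∞)
    (hb : eLpNorm (fun j => b j * (ω (ι j) : ℂ)) p Measure.count ≠ ∞) :
    eLpNorm (fun j => (∑' k, a k * b (j - k)) * (ω (ι j) : ℂ)) p Measure.count ≤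
      ENNReal.ofReal C *
        eLpNorm (fun j => a j * (v (ι j) : ℂ)) (ENNReal.ofReal r) Measure.count *
        eLpNorm (fun j => b j * (ω (ι j) : ℂ)) p Measure.count :=
  stmt4_general d r hr0 hr1 p hrp ω v C hC hω hv hmod ι hι a b
end

section
/- Let 0 < p < 1, let θ > 0, and let f, g : ℝ → [0,∞) be step functions constant on the lattice cells θ[j, j+1), namely f = Σ_j a(j) χ_{[θj, θ(j+1))} and g = Σ_j b(j) χ_{[θj, θ(j+1))}. Then the semi-discrete convolution (a *_{[θ]} g)(x) = Σ_j a(j) g(x - θj) satisfies ‖a *_{[θ]} g‖_{L^p(ℝ)} ≤ ‖a‖_{ℓ^p(ℤ)} ‖g‖_{L^p(ℝ)}. -/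
open MeasureTheory
open scoped ENNReal

private lemma tsum_rpow_le' (x : ℤ → ℝ≥0∞) {p : ℝ} (hp0 : 0 < p) (hp1 : p ≤ 1) :
    (∑' i, x i) ^ p ≤ ∑' i, x i ^ p := by
  have hfin : ∀ s : Finset ℤ, (∑ i ∈ s, x i) ^ p ≤ ∑ i ∈ s, x i ^ p := by
    intro s
    induction s using Finset.induction_on with
    | empty => simp [ENNReal.zero_rpow_of_pos hp0]
    | @insert j s hj ih =>
      rw [Finset.sum_insert hj, Finset.sum_insert hj]
      exact (ENNReal.rpow_add_le_add_rpow _ _ hp0.le hp1).trans (add_le_add_right ih _)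
  have h1 : (∑' i, x i) ≤ (∑' i, x i ^ p) ^ (1 / p) := by
    rw [ENNReal.tsum_eq_iSup_sum]
    refine iSup_le fun s => ?_
    rw [← ENNReal.rpow_le_rpow_iff hp0, ← ENNReal.rpow_mul, one_div,
      inv_mul_cancel₀ hp0.ne', ENNReal.rpow_one]
    exact (hfin s).trans (ENNReal.sum_le_tsum s)
  calc (∑' i, x i) ^ p ≤ ((∑' i, x i ^ p) ^ (1 / p)) ^ p := ENNReal.rpow_le_rpow h1 hp0.le
    _ = ∑' i, x i ^ p := by
        rw [← ENNReal.rpow_mul, one_div, inv_mul_cancel₀ hp0.ne', ENNReal.rpow_one]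

private lemma nnnorm_tsum_le'' (f : ℤ → ℝ) :
    (‖∑' j, f j‖₊ : ℝ≥0∞) ≤ ∑' j, (‖f j‖₊ : ℝ≥0∞) := by
  by_cases h : Summable fun j => ‖f j‖₊
  · rw [← ENNReal.coe_tsum h]
    exact ENNReal.coe_le_coe.2 (nnnorm_tsum_le h)
  · have htop : (∑' j, (‖f j‖₊ : ℝ≥0∞)) = ⊤ := by
      by_contra hc
      exact h (ENNReal.tsum_coe_ne_top_iff_summable.1 hc)
    simp [htop]

private lemma lint_step (θ : ℝ) (hθ : 0 < θ) (F : ℝ → ℝ≥0∞) (c : ℤ → ℝ≥0∞)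
    (hF : ∀ (k : ℤ) (x : ℝ), x ∈ Set.Ico (θ * k) (θ * (k + 1)) → F x = c k) :
    ∫⁻ x, F x = ∑' k : ℤ, ENNReal.ofReal θ * c k := by
  have hUnion : (⋃ k : ℤ, Set.Ico (θ * (k : ℝ)) (θ * (k + 1))) = Set.univ := by
    ext x
    simp only [Set.mem_iUnion, Set.mem_univ, iff_true, Set.mem_Ico]
    refine ⟨⌊x / θ⌋, ?_, ?_⟩
    · rw [mul_comm]; exact (le_div_iff₀ hθ).1 (Int.floor_le _)
    · rw [mul_comm]; exact (div_lt_iff₀ hθ).1 (Int.lt_floor_add_one _)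
  have hdisj : Pairwise (Function.onFun Disjoint
      fun k : ℤ => Set.Ico (θ * (k : ℝ)) (θ * (k + 1))) := by
    intro k l hkl
    have key : ∀ k l : ℤ, k < l → Disjoint (Set.Ico (θ * (k : ℝ)) (θ * (k + 1)))
        (Set.Ico (θ * (l : ℝ)) (θ * (l + 1))) := by
      intro k l h
      rw [Set.Ico_disjoint_Ico]
      have h1 : ((k : ℝ) + 1) ≤ l := by exact_mod_cast h
      have h2 : θ * ((k : ℝ) + 1) ≤ θ * l := by nlinarith
      exact le_trans (min_le_left _ _) (le_trans h2 (le_max_right _ _))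
    rcases hkl.lt_or_gt with h | h
    · exact key k l h
    · exact (key l k h).symm
  rw [← setLIntegral_univ, ← hUnion, lintegral_iUnion (fun _ => measurableSet_Ico) hdisj]
  refine tsum_congr fun k => ?_
  rw [setLIntegral_congr_fun measurableSet_Ico (hF k),
    setLIntegral_const, Real.volume_Ico, mul_comm]
  congr 1
  congr 1
  ring

/-- For 0 < p < 1, a step function g constant on the lattice cells [θj, θ(j+1))
and nonnegative coefficients a, the semi-discrete convolution satisfies
‖a *_{[θ]} g‖_{L^p} ≤ ‖a‖_{ℓ^p} ‖g‖_{L^p}. -/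
theorem stmt5 (p : ℝ) (hp0 : 0 < p) (hp1 : p < 1) (θ : ℝ) (hθ : 0 < θ)
    (a b : ℤ → ℝ) (ha : ∀ j, 0 ≤ a j) (hb : ∀ j, 0 ≤ b j)
    (g : ℝ → ℝ)
    (hg : ∀ (j : ℤ) (x : ℝ), x ∈ Set.Ico (θ * j) (θ * (j + 1)) → g x = b j) :
    eLpNorm (fun x => ∑' j : ℤ, a j * g (x - θ * j)) (ENNReal.ofReal p) volume ≤
      eLpNorm a (ENNReal.ofReal p) Measure.count *
        eLpNorm g (ENNReal.ofReal p) volume := by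
  have hq0 : ENNReal.ofReal p ≠ 0 := by simp [ENNReal.ofReal_eq_zero, not_le, hp0]
  have hqt : ENNReal.ofReal p ≠ ⊤ := ENNReal.ofReal_ne_top
  have hqr : (ENNReal.ofReal p).toReal = p := ENNReal.toReal_ofReal hp0.le
  rw [eLpNorm_eq_lintegral_rpow_enorm_toReal hq0 hqt, eLpNorm_eq_lintegral_rpow_enorm_toReal hq0 hqt,
    eLpNorm_eq_lintegral_rpow_enorm_toReal hq0 hqt, hqr]
  simp only [enorm_eq_nnnorm]
  -- the three integrals
  have hA : ∫⁻ j, (‖a j‖₊ : ℝ≥0∞) ^ p ∂Measure.count = ∑' j, (‖a j‖₊ : ℝ≥0∞) ^ p :=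
    lintegral_count _
  have hB : ∫⁻ x, (‖g x‖₊ : ℝ≥0∞) ^ p =
      ∑' k : ℤ, ENNReal.ofReal θ * (‖b k‖₊ : ℝ≥0∞) ^ p := by
    refine lint_step θ hθ _ _ fun k x hx => ?_
    rw [hg k x hx]
  have hC : ∫⁻ x, (‖∑' j : ℤ, a j * g (x - θ * j)‖₊ : ℝ≥0∞) ^ p =
      ∑' k : ℤ, ENNReal.ofReal θ * (‖∑' j : ℤ, a j * b (k - j)‖₊ : ℝ≥0∞) ^ p := by
    refine lint_step θ hθ _ _ fun k x hx => ?_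
    have hgx : ∀ j : ℤ, g (x - θ * j) = b (k - j) := by
      intro j
      apply hg (k - j)
      obtain ⟨h1, h2⟩ := hx
      constructor <;> push_cast <;> nlinarith
    simp only [hgx]
  rw [hA, hB, hC]
  -- key pointwise bound
  set A : ℝ≥0∞ := ∑' j, (‖a j‖₊ : ℝ≥0∞) ^ p with hAdef
  set B : ℝ≥0∞ := ∑' k : ℤ, ENNReal.ofReal θ * (‖b k‖₊ : ℝ≥0∞) ^ p with hBdef
  have hkey : (∑' k : ℤ, ENNReal.ofReal θ * (‖∑' j : ℤ, a j * b (k - j)‖₊ : ℝ≥0∞) ^ p)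
      ≤ A * B := by
    have step1 : ∀ k : ℤ, (‖∑' j : ℤ, a j * b (k - j)‖₊ : ℝ≥0∞) ^ p ≤
        ∑' j : ℤ, (‖a j‖₊ : ℝ≥0∞) ^ p * (‖b (k - j)‖₊ : ℝ≥0∞) ^ p := by
      intro k
      calc (‖∑' j : ℤ, a j * b (k - j)‖₊ : ℝ≥0∞) ^ p
          ≤ (∑' j : ℤ, (‖a j * b (k - j)‖₊ : ℝ≥0∞)) ^ p :=
            ENNReal.rpow_le_rpow (nnnorm_tsum_le'' _) hp0.le
        _ ≤ ∑' j : ℤ, (‖a j * b (k - j)‖₊ : ℝ≥0∞) ^ p := tsum_rpow_le' _ hp0 hp1.le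
        _ = ∑' j : ℤ, (‖a j‖₊ : ℝ≥0∞) ^ p * (‖b (k - j)‖₊ : ℝ≥0∞) ^ p := by
            refine tsum_congr fun j => ?_
            rw [nnnorm_mul, ENNReal.coe_mul, ENNReal.mul_rpow_of_nonneg _ _ hp0.le]
    calc (∑' k : ℤ, ENNReal.ofReal θ * (‖∑' j : ℤ, a j * b (k - j)‖₊ : ℝ≥0∞) ^ p)
        ≤ ∑' k : ℤ, ENNReal.ofReal θ *
            ∑' j : ℤ, (‖a j‖₊ : ℝ≥0∞) ^ p * (‖b (k - j)‖₊ : ℝ≥0∞) ^ p := by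
          exact ENNReal.tsum_le_tsum fun k => mul_le_mul_right (step1 k) _
      _ = ∑' j : ℤ, (‖a j‖₊ : ℝ≥0∞) ^ p *
            ∑' k : ℤ, ENNReal.ofReal θ * (‖b (k - j)‖₊ : ℝ≥0∞) ^ p := by
          calc (∑' k : ℤ, ENNReal.ofReal θ *
                  ∑' j : ℤ, (‖a j‖₊ : ℝ≥0∞) ^ p * (‖b (k - j)‖₊ : ℝ≥0∞) ^ p)
              = ∑' (k : ℤ) (j : ℤ), ENNReal.ofReal θ *
                  ((‖a j‖₊ : ℝ≥0∞) ^ p * (‖b (k - j)‖₊ : ℝ≥0∞) ^ p) := by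
                refine tsum_congr fun k => ?_
                rw [ENNReal.tsum_mul_left]
            _ = ∑' (j : ℤ) (k : ℤ), ENNReal.ofReal θ *
                  ((‖a j‖₊ : ℝ≥0∞) ^ p * (‖b (k - j)‖₊ : ℝ≥0∞) ^ p) := ENNReal.tsum_comm
            _ = ∑' j : ℤ, (‖a j‖₊ : ℝ≥0∞) ^ p *
                  ∑' k : ℤ, ENNReal.ofReal θ * (‖b (k - j)‖₊ : ℝ≥0∞) ^ p := by
                refine tsum_congr fun j => ?_
                rw [← ENNReal.tsum_mul_left]
                refine tsum_congr fun k => ?_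
                ring
      _ = A * B := by
          have hshift : ∀ j : ℤ, (∑' k : ℤ, ENNReal.ofReal θ * (‖b (k - j)‖₊ : ℝ≥0∞) ^ p)
              = B := fun j =>
            (Equiv.subRight j).tsum_eq fun k => ENNReal.ofReal θ * (‖b k‖₊ : ℝ≥0∞) ^ p
          simp_rw [hshift]
          exact ENNReal.tsum_mul_right
  calc (∑' k : ℤ, ENNReal.ofReal θ * (‖∑' j : ℤ, a j * b (k - j)‖₊ : ℝ≥0∞) ^ p) ^ (1 / p)
      ≤ (A * B) ^ (1 / p) := ENNReal.rpow_le_rpow hkey (by positivity)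
    _ = A ^ (1 / p) * B ^ (1 / p) := ENNReal.mul_rpow_of_nonneg _ _ (by positivity)
end
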